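/- Let ε_i = ℓ_i(ĉ) − ℓ_i(c_i) with ℓ_i taking values in [−1,1]. Then the average regret ε̄ = (1/N) Σ_i ε_i satisfies ε̄ ∈ [−2, 2], and if the sequence c_i is chosen by any algorithm with regret Reg(N) = Σ_i ε_i satisfying Reg(N)/N → 0, then for every γ > 0 there exists N₀ such that for all N ≥ N₀, there exists i ≤ N with J(π_i, c*) − J(π_E, c*) ≤ γT, under the hypotheses of the single-task ICL theorem. -/

import Mathlib

/-!
Feasibility `J(πᵢ, cᵢ) ≤ J(π_E, cᵢ)` makes every played loss `ℓᵢ(cᵢ)` nonpositive, so the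
cumulative loss of `c*` is at most that of the best constraint in hindsight, hence at most
`Reg(N)`. Some round `i < N` therefore has `ℓᵢ(c*) ≤ Reg(N)/N`, and no regret makes this
eventually smaller than `γ`.
-/

open Filter Finset

theorem sum_range_div_mem_Icc {x : ℕ → ℝ} {a b : ℝ} {N : ℕ} (hN : 1 ≤ N)
    (hx : ∀ i ∈ range N, x i ∈ Set.Icc a b) :
    (∑ i ∈ range N, x i) / N ∈ Set.Icc a b := by
  have hNpos : (0 : ℝ) < N := by exact_mod_cast hN
  have hlow := card_nsmul_le_sum (range N) x a fun i hi => (hx i hi).1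
  have hhigh := sum_le_card_nsmul (range N) x b fun i hi => (hx i hi).2
  simp only [card_range, nsmul_eq_mul] at hlow hhigh
  exact ⟨(le_div_iff₀ hNpos).2 (by linarith), (div_le_iff₀ hNpos).2 (by linarith)⟩

theorem exists_lt_le_div_of_sum_range_le {x : ℕ → ℝ} {R : ℝ} {N : ℕ} (hN : 0 < N)
    (h : ∑ i ∈ range N, x i ≤ R) : ∃ i < N, x i ≤ R / N := by
  have hsum : ∑ _i ∈ range N, R / N = R := by
    rw [sum_const, card_range, nsmul_eq_mul]
    field_simp
  obtain ⟨i, hi, hle⟩ := exists_le_of_sum_le (nonempty_range_iff.2 hN.ne') (h.trans hsum.ge)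
  exact ⟨i, mem_range.1 hi, hle⟩

/-- Asymptotic consequence of the single-task ICL theorem under a no-regret
constraint-selection algorithm. -/
theorem icl_no_regret_asymptotic
    {P F : Type*} (J : P → F → ℝ) (T : ℝ) (hT : 0 < T)
    (πE : P) (cstar : F) (c : ℕ → F) (π : ℕ → P)
    (ℓ : ℕ → F → ℝ)
    (hℓ : ∀ i c', ℓ i c' = (J (π i) c' - J πE c') / T)
    (hℓbdd : ∀ i c', ℓ i c' ∈ Set.Icc (-1 : ℝ) 1)
    (hfeas : ∀ i, J (π i) (c i) ≤ J πE (c i))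
    (chat : ℕ → F)
    (hchat : ∀ N : ℕ, ∀ c' : F,
      ∑ i ∈ Finset.range N, ℓ i c' ≤ ∑ i ∈ Finset.range N, ℓ i (chat N))
    (Reg : ℕ → ℝ)
    (hReg : ∀ N, Reg N = ∑ i ∈ Finset.range N, (ℓ i (chat N) - ℓ i (c i)))
    (hNoRegret : Tendsto (fun N : ℕ => Reg N / N) atTop (nhds 0)) :
    (∀ N : ℕ, 1 ≤ N → Reg N / N ∈ Set.Icc (-2 : ℝ) 2) ∧
    (∀ γ : ℝ, 0 < γ → ∃ N₀ : ℕ, ∀ N : ℕ, N₀ ≤ N →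
      ∃ i < N, J (π i) cstar - J πE cstar ≤ γ * T) := by
  have hplayed : ∀ i, ℓ i (c i) ≤ 0 := fun i => by
    rw [hℓ]
    exact div_nonpos_of_nonpos_of_nonneg (sub_nonpos.2 (hfeas i)) hT.le
  have hcstar : ∀ N, ∑ i ∈ range N, ℓ i cstar ≤ Reg N := fun N => by
    rw [hReg, sum_sub_distrib]
    linarith [hchat N cstar, sum_nonpos fun i (_ : i ∈ range N) => hplayed i]
  refine ⟨fun N hN => ?_, fun γ hγ => ?_⟩
  · rw [hReg]
    refine sum_range_div_mem_Icc hN fun i _ => ?_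
    obtain ⟨hhat₁, hhat₂⟩ := hℓbdd i (chat N)
    obtain ⟨hc₁, hc₂⟩ := hℓbdd i (c i)
    exact ⟨by linarith, by linarith⟩
  · obtain ⟨N₀, hN₀⟩ := eventually_atTop.1
      ((hNoRegret.eventually (ge_mem_nhds hγ)).and (eventually_gt_atTop 0))
    refine ⟨N₀, fun N hN => ?_⟩
    obtain ⟨hRegγ, hNpos⟩ := hN₀ N hN
    obtain ⟨i, hi, hle⟩ := exists_lt_le_div_of_sum_range_le hNpos (hcstar N)
    have hγle := hle.trans hRegγ
    rw [hℓ, div_le_iff₀ hT] at hγle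
    exact ⟨i, hi, hγle⟩
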